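/- Let m ∈ ℝ, λ > 0, ν > 0, β > 0. Then the posterior predictive density obtained by marginalizing the Gaussian likelihood against the Normal Inverse Gamma distribution is a Student-t density with 2ν degrees of freedom, location m, and squared scale s² = β(λ + 1)/(λν); that is, for every z ∈ ℝ: ∫_0^∞ ∫_{−∞}^{∞} (2πσ²)^{−1/2} exp(−(z − μ)²/(2σ²)) · NIG(μ, σ² | m, λ, ν, β) dμ d(σ²) = t_{2ν}(z | m, β(λ+1)/(λν)). -/

import Mathlib

open MeasureTheory Real

/-- The Normal Inverse Gamma density
`NIG(μ, σ² | m, λ, ν, β) = N(μ | m, σ²/λ) · Γ⁻¹(σ² | ν, β)`. -/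
noncomputable def nig (m lam nu beta μ σ2 : ℝ) : ℝ :=
  (2 * π * σ2 / lam) ^ (-(1 : ℝ) / 2) * Real.exp (-lam * (μ - m) ^ 2 / (2 * σ2)) *
    (beta ^ nu / Real.Gamma nu) * σ2 ^ (-nu - 1) * Real.exp (-beta / σ2)

/-- The Student-t density with `d` degrees of freedom, location `m`, and
squared scale `s²`. -/
noncomputable def studentT (d m s2 z : ℝ) : ℝ :=
  Real.Gamma ((d + 1) / 2) / (Real.Gamma (d / 2) * Real.sqrt (d * π * s2)) *
    (1 + (z - m) ^ 2 / (d * s2)) ^ (-(d + 1) / 2)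

lemma gauss_shift {b : ℝ} (hb : 0 < b) (c : ℝ) :
    ∫ x : ℝ, Real.exp (-b * (x - c) ^ 2) = Real.sqrt (π / b) := by
  rw [← integral_gaussian b]
  exact integral_sub_right_eq_self (fun x => Real.exp (-b * x ^ 2)) c

lemma inner_int {lam σ2 : ℝ} (m z : ℝ) (hlam : 0 < lam) (hσ : 0 < σ2) :
    (∫ μ : ℝ, Real.exp (-(z - μ) ^ 2 / (2 * σ2)) * Real.exp (-lam * (μ - m) ^ 2 / (2 * σ2)))
      = Real.sqrt (2 * π * σ2 / (1 + lam)) *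
          Real.exp (-(lam * (z - m) ^ 2) / (2 * σ2 * (1 + lam))) := by
  have h1 : (1 + lam) ≠ 0 := by positivity
  have h2 : (2 * σ2) ≠ 0 := by positivity
  have hb : 0 < (1 + lam) / (2 * σ2) := by positivity
  have key : ∀ μ : ℝ,
      Real.exp (-(z - μ) ^ 2 / (2 * σ2)) * Real.exp (-lam * (μ - m) ^ 2 / (2 * σ2))
        = Real.exp (-((1 + lam) / (2 * σ2)) * (μ - (z + lam * m) / (1 + lam)) ^ 2) *
            Real.exp (-(lam * (z - m) ^ 2) / (2 * σ2 * (1 + lam))) := by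
    intro μ
    rw [← Real.exp_add, ← Real.exp_add]
    congr 1
    field_simp
    ring
  simp_rw [key]
  rw [integral_mul_const, gauss_shift hb]
  rw [show π / ((1 + lam) / (2 * σ2)) = 2 * π * σ2 / (1 + lam) by
    field_simp]

lemma inv_gamma_integral {s c : ℝ} (hs : 0 < s) (hc : 0 < c) :
    ∫ x in Set.Ioi (0:ℝ), x ^ (-s - 1) * Real.exp (-c / x)
      = Real.Gamma s * c ^ (-s) := by
  have h2 : (∫ y in Set.Ioi (0:ℝ), Real.exp (-(c*y)) * (c*y) ^ (s-1))
      = c⁻¹ * Real.Gamma s := by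
    have := integral_comp_mul_left_Ioi (fun y => Real.exp (-y) * y ^ (s-1)) 0 hc
    simp only [mul_zero, smul_eq_mul] at this
    rw [this, ← Real.Gamma_eq_integral hs]
  have h1 := integral_comp_rpow_Ioi (fun y => Real.exp (-(c*y)) * (c*y) ^ (s-1))
    (p := -1) (by norm_num)
  rw [h2] at h1
  have h3 : Set.EqOn
      (fun x : ℝ => (|(-1:ℝ)| * x ^ ((-1:ℝ) - 1)) •
        (Real.exp (-(c * x ^ (-1:ℝ))) * (c * x ^ (-1:ℝ)) ^ (s-1)))
      (fun x : ℝ => c ^ (s-1) * (x ^ (-s - 1) * Real.exp (-c / x)))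
      (Set.Ioi 0) := by
    intro x hx
    have hx0 : (0:ℝ) < x := hx
    simp only [smul_eq_mul]
    rw [Real.rpow_neg_one, Real.mul_rpow hc.le (inv_nonneg.mpr hx0.le),
      Real.inv_rpow hx0.le, ← Real.rpow_neg hx0.le, abs_neg, abs_one, one_mul]
    rw [div_eq_mul_inv, neg_mul, ← Real.rpow_neg_one x]
    have hxx : x ^ ((-1:ℝ) - 1) * x ^ (-(s-1)) = x ^ (-s - 1) := by
      rw [← Real.rpow_add hx0]; ring_nf
    rw [← hxx]; ring
  rw [setIntegral_congr_fun measurableSet_Ioi h3, integral_const_mul] at h1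
  have hcs : c ^ (s-1) ≠ 0 := (Real.rpow_pos_of_pos hc _).ne'
  field_simp at h1
  have hpows : c ^ (s-1) * c = c ^ s := by
    rw [← Real.rpow_add_one hc.ne']; ring_nf
  have h4 : (∫ x in Set.Ioi (0:ℝ), x ^ (-s - 1) * Real.exp (-c / x)) * c ^ s
      = Real.Gamma s := by
    rw [← hpows]; simp only [neg_div] at h1 ⊢; linear_combination h1
  have hcs0 : (c:ℝ) ^ s ≠ 0 := (Real.rpow_pos_of_pos hc s).ne'
  rw [Real.rpow_neg hc.le]
  field_simp
  simp only [neg_div] at h4 ⊢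
  linear_combination h4

/-- Posterior predictive of the Normal Inverse Gamma model: marginalizing the
Gaussian likelihood against the `NIG(m, λ, ν, β)` density over `(μ, σ²)` gives
the Student-t density with `2ν` degrees of freedom, location `m`, and squared
scale `β(λ+1)/(λν)`. -/
theorem nig_posterior_predictive_studentT (m lam nu beta : ℝ)
    (hlam : 0 < lam) (hnu : 0 < nu) (hbeta : 0 < beta) (z : ℝ) :
    (∫ σ2 in Set.Ioi (0 : ℝ), ∫ μ : ℝ,
        (2 * π * σ2) ^ (-(1 : ℝ) / 2) * Real.exp (-(z - μ) ^ 2 / (2 * σ2)) *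
          nig m lam nu beta μ σ2) =
      studentT (2 * nu) m (beta * (lam + 1) / (lam * nu)) z := by
  have hπ := Real.pi_pos
  have h1lam : (0:ℝ) < 1 + lam := by linarith
  set c : ℝ := beta + lam * (z - m) ^ 2 / (2 * (1 + lam)) with hc_def
  have hc : 0 < c := by positivity
  have hs' : (0:ℝ) < nu + 1/2 := by linarith
  set K : ℝ := Real.sqrt (lam / (2 * π * (1 + lam))) * (beta ^ nu / Real.Gamma nu)
    with hK_def
  -- Step 1: inner integral
  have inner_full : ∀ σ2 ∈ Set.Ioi (0:ℝ),
      (∫ μ : ℝ, (2 * π * σ2) ^ (-(1 : ℝ) / 2) * Real.exp (-(z - μ) ^ 2 / (2 * σ2)) *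
          nig m lam nu beta μ σ2)
        = K * (σ2 ^ (-(nu + 1/2) - 1) * Real.exp (-c / σ2)) := by
    intro σ2 hσ
    have hσ0 : (0:ℝ) < σ2 := hσ
    have rearr : ∀ μ : ℝ,
        (2 * π * σ2) ^ (-(1 : ℝ) / 2) * Real.exp (-(z - μ) ^ 2 / (2 * σ2)) *
            nig m lam nu beta μ σ2
          = ((2 * π * σ2) ^ (-(1 : ℝ) / 2) * (2 * π * σ2 / lam) ^ (-(1 : ℝ) / 2) *
              (beta ^ nu / Real.Gamma nu) * σ2 ^ (-nu - 1) * Real.exp (-beta / σ2)) *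
              (Real.exp (-(z - μ) ^ 2 / (2 * σ2)) * Real.exp (-lam * (μ - m) ^ 2 / (2 * σ2))) := by
      intro μ; unfold nig; ring
    simp_rw [rearr]
    rw [integral_const_mul, inner_int m z hlam hσ0]
    have hexp : Real.exp (-beta / σ2) * Real.exp (-(lam * (z - m) ^ 2) / (2 * σ2 * (1 + lam)))
        = Real.exp (-c / σ2) := by
      rw [← Real.exp_add]
      congr 1
      rw [hc_def]
      field_simp
      ring
    have hpow : (2 * π * σ2) ^ (-(1 : ℝ) / 2) * (2 * π * σ2 / lam) ^ (-(1 : ℝ) / 2) *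
        Real.sqrt (2 * π * σ2 / (1 + lam)) * σ2 ^ (-nu - 1)
        = Real.sqrt (lam / (2 * π * (1 + lam))) * σ2 ^ (-(nu + 1/2) - 1) := by
      have p1 : (0:ℝ) < 2 * π * σ2 := by positivity
      have p2 : (0:ℝ) < 2 * π * σ2 / lam := by positivity
      have p3 : (0:ℝ) < 2 * π * σ2 / (1 + lam) := by positivity
      have p4 : (0:ℝ) < lam / (2 * π * (1 + lam)) := by positivity
      rw [Real.sqrt_eq_rpow, Real.sqrt_eq_rpow,
        Real.rpow_def_of_pos p1, Real.rpow_def_of_pos p2, Real.rpow_def_of_pos p3,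
        Real.rpow_def_of_pos p4, Real.rpow_def_of_pos hσ0, Real.rpow_def_of_pos hσ0,
        ← Real.exp_add, ← Real.exp_add, ← Real.exp_add, ← Real.exp_add]
      congr 1
      rw [Real.log_div p1.ne' hlam.ne', Real.log_div p1.ne' h1lam.ne',
        Real.log_div hlam.ne' (by positivity : (2 * π * (1 + lam)) ≠ 0),
        Real.log_mul (by positivity : ((2:ℝ)*π) ≠ 0) hσ0.ne',
        Real.log_mul (by positivity : ((2:ℝ)*π) ≠ 0) h1lam.ne']
      ring
    calc ((2 * π * σ2) ^ (-(1 : ℝ) / 2) * (2 * π * σ2 / lam) ^ (-(1 : ℝ) / 2) *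
          (beta ^ nu / Real.Gamma nu) * σ2 ^ (-nu - 1) * Real.exp (-beta / σ2)) *
          (Real.sqrt (2 * π * σ2 / (1 + lam)) *
            Real.exp (-(lam * (z - m) ^ 2) / (2 * σ2 * (1 + lam))))
        = ((2 * π * σ2) ^ (-(1 : ℝ) / 2) * (2 * π * σ2 / lam) ^ (-(1 : ℝ) / 2) *
            Real.sqrt (2 * π * σ2 / (1 + lam)) * σ2 ^ (-nu - 1)) *
            (beta ^ nu / Real.Gamma nu) *
            (Real.exp (-beta / σ2) * Real.exp (-(lam * (z - m) ^ 2) / (2 * σ2 * (1 + lam)))) := by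
          ring
      _ = K * (σ2 ^ (-(nu + 1/2) - 1) * Real.exp (-c / σ2)) := by
          rw [hexp, hpow, hK_def]; ring
  -- Step 2: outer integral
  rw [setIntegral_congr_fun measurableSet_Ioi inner_full, integral_const_mul,
    inv_gamma_integral hs' hc]
  -- Step 3: identify with Student-t
  unfold studentT
  rw [show (2 * nu + 1) / 2 = nu + 1/2 by ring, show 2 * nu / 2 = nu by ring,
    show -(2 * nu + 1) / 2 = -(nu + 1/2) by ring]
  have harg : 1 + (z - m) ^ 2 / (2 * nu * (beta * (lam + 1) / (lam * nu))) = c / beta := by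
    rw [hc_def]; field_simp; ring
  rw [harg]
  have hG : 0 < Real.Gamma nu := Real.Gamma_pos_of_pos hnu
  have hS : 0 < Real.Gamma (nu + 1/2) := Real.Gamma_pos_of_pos hs'
  have harg2 : 2 * nu * π * (beta * (lam + 1) / (lam * nu))
      = (lam / (2 * π * (1 + lam)))⁻¹ * beta := by
    field_simp; ring
  rw [harg2, Real.sqrt_mul (by positivity) beta, Real.sqrt_inv]
  rw [Real.div_rpow hc.le hbeta.le, Real.rpow_neg hbeta.le,
    Real.rpow_add hbeta, ← Real.sqrt_eq_rpow]
  have hq : (0:ℝ) < Real.sqrt (lam / (2 * π * (1 + lam))) := Real.sqrt_pos.mpr (by positivity)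
  have hsb : (0:ℝ) < Real.sqrt beta := Real.sqrt_pos.mpr hbeta
  have hbn : (0:ℝ) < beta ^ nu := Real.rpow_pos_of_pos hbeta nu
  have hmul : Real.sqrt beta * Real.sqrt beta = beta := Real.mul_self_sqrt hbeta.le
  rw [hK_def]
  field_simp
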